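/- If X_1, ..., X_N are random variables satisfying H(X_{L^C} | X_L) ≥ h for every subset L ⊆ [1:N] of size ℓ (where L^C is the complement), then Σ_{i=1}^N H(X_i) ≥ N·h/(N−ℓ). -/

import Mathlib

open Finset

variable {Ω : Type*} [Fintype Ω]

/-- Probability mass of the event `X = s` under the pmf `p` on a finite sample space. -/
noncomputable def pm (p : Ω → ℝ) {S : Type*} [DecidableEq S] (X : Ω → S) (s : S) : ℝ :=
  ∑ ω ∈ Finset.univ.filter (fun ω => X ω = s), p ω

/-- Shannon entropy of a finite random variable `X` under the pmf `p`. -/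
noncomputable def ent (p : Ω → ℝ) {S : Type*} [Fintype S] [DecidableEq S] (X : Ω → S) : ℝ :=
  -∑ s, pm p X s * Real.log (pm p X s)

/-- Conditional entropy `H(X | Y) = H(X, Y) - H(Y)`. -/
noncomputable def condEnt (p : Ω → ℝ) {S T : Type*} [Fintype S] [DecidableEq S]
    [Fintype T] [DecidableEq T] (X : Ω → S) (Y : Ω → T) : ℝ :=
  ent p (fun ω => (X ω, Y ω)) - ent p Y

/-- Mutual information `I(X ; Y) = H(X) + H(Y) - H(X, Y)`. -/
noncomputable def mutInf (p : Ω → ℝ) {S T : Type*} [Fintype S] [DecidableEq S]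
    [Fintype T] [DecidableEq T] (X : Ω → S) (Y : Ω → T) : ℝ :=
  ent p X + ent p Y - ent p (fun ω => (X ω, Y ω))

/-! Subadditivity of entropy (Gibbs' inequality) gives
`H(X_{Lᶜ} | X_L) ≤ H(X_{Lᶜ}) ≤ ∑_{i ∉ L} H(Xᵢ)`, so each constraint bounds `h` by
`∑_{i ∉ L} H(Xᵢ)`. Summing over the `(N choose ℓ)` sets `L` counts every index
`(N - 1 choose ℓ)` times, and `(N - 1 choose ℓ) * N = (N choose ℓ) * (N - ℓ)`. -/

lemma mul_log_le_mul_log_add_sub {q r : ℝ} (hq : 0 ≤ q) (hr : 0 ≤ r) (hqr : 0 < q → 0 < r) :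
    q * Real.log r ≤ q * Real.log q + (r - q) := by
  rcases hq.eq_or_lt with rfl | hq
  · simpa using hr
  have hr := hqr hq
  have hlog := Real.log_le_sub_one_of_pos (div_pos hr hq)
  rw [Real.log_div hr.ne' hq.ne'] at hlog
  have := mul_le_mul_of_nonneg_left hlog hq.le
  rw [mul_sub, mul_sub, mul_one, mul_div_cancel₀ _ hq.ne'] at this
  linarith

section Entropy

variable (p : Ω → ℝ) {S T : Type*} [DecidableEq S] [DecidableEq T]

lemma pm_nonneg (hp0 : ∀ ω, 0 ≤ p ω) (X : Ω → S) (s : S) : 0 ≤ pm p X s :=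
  sum_nonneg fun ω _ => hp0 ω

lemma sum_pm [Fintype S] (X : Ω → S) : ∑ s, pm p X s = ∑ ω, p ω :=
  sum_fiberwise_of_maps_to (fun _ _ => mem_univ _) p

lemma sum_pm_prod_right [Fintype T] (X : Ω → S) (Y : Ω → T) (s : S) :
    ∑ t, pm p (fun ω => (X ω, Y ω)) (s, t) = pm p X s := by
  unfold pm
  rw [← sum_fiberwise_of_maps_to (g := Y) (fun ω _ => mem_univ (Y ω)) p]
  refine sum_congr rfl fun t _ => sum_congr ?_ fun _ _ => rfl
  ext ω
  simp [Prod.ext_iff]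

lemma sum_pm_prod_left [Fintype S] (X : Ω → S) (Y : Ω → T) (t : T) :
    ∑ s, pm p (fun ω => (X ω, Y ω)) (s, t) = pm p Y t := by
  unfold pm
  rw [← sum_fiberwise_of_maps_to (g := X) (fun ω _ => mem_univ (X ω)) p]
  refine sum_congr rfl fun s _ => sum_congr ?_ fun _ _ => rfl
  ext ω
  simp [Prod.ext_iff, and_comm]

theorem ent_prod_le_add [Fintype S] [Fintype T] (hp0 : ∀ ω, 0 ≤ p ω) (hp1 : ∑ ω, p ω = 1)
    (X : Ω → S) (Y : Ω → T) :
    ent p (fun ω => (X ω, Y ω)) ≤ ent p X + ent p Y := by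
  unfold ent
  rw [Fintype.sum_prod_type]
  set q := pm p (fun ω => (X ω, Y ω))
  set a := pm p X
  set b := pm p Y
  have hq0 : ∀ z, 0 ≤ q z := pm_nonneg p hp0 _
  have hqa : ∀ s, ∑ t, q (s, t) = a s := sum_pm_prod_right p X Y
  have hqb : ∀ t, ∑ s, q (s, t) = b t := sum_pm_prod_left p X Y
  have hq_le_a : ∀ s t, q (s, t) ≤ a s := fun s t =>
    (single_le_sum (fun t' _ => hq0 (s, t')) (mem_univ t)).trans_eq (hqa s)
  have hq_le_b : ∀ s t, q (s, t) ≤ b t := fun s t =>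
    (single_le_sum (fun s' _ => hq0 (s', t)) (mem_univ s)).trans_eq (hqb t)
  have hpointwise : ∀ s t, q (s, t) * Real.log (a s) + q (s, t) * Real.log (b t) ≤
      q (s, t) * Real.log (q (s, t)) + (a s * b t - q (s, t)) := by
    intro s t
    have hab : 0 ≤ a s * b t := mul_nonneg (pm_nonneg p hp0 X s) (pm_nonneg p hp0 Y t)
    have hgibbs := mul_log_le_mul_log_add_sub (hq0 (s, t)) hab fun hq =>
      mul_pos (hq.trans_le (hq_le_a s t)) (hq.trans_le (hq_le_b s t))
    rcases (hq0 (s, t)).eq_or_lt with hq | hq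
    · simpa [← hq] using hab
    · rwa [Real.log_mul (hq.trans_le (hq_le_a s t)).ne' (hq.trans_le (hq_le_b s t)).ne',
        mul_add] at hgibbs
  have hsum := sum_le_sum fun s (_ : s ∈ univ) => sum_le_sum fun t (_ : t ∈ univ) =>
    hpointwise s t
  have hasum : ∑ s, a s = 1 := by rw [sum_pm, hp1]
  have habsum : ∑ s, ∑ t, a s * b t = 1 := by
    rw [← sum_mul_sum, sum_pm, sum_pm, hp1, one_mul]
  simp only [sum_add_distrib, sum_sub_distrib] at hsum
  rw [sum_comm (f := fun s t => q (s, t) * Real.log (b t))] at hsum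
  simp only [← sum_mul, hqa, hqb, hasum, habsum] at hsum
  linarith

theorem condEnt_le_ent [Fintype S] [Fintype T] (hp0 : ∀ ω, 0 ≤ p ω) (hp1 : ∑ ω, p ω = 1)
    (X : Ω → S) (Y : Ω → T) :
    condEnt p X Y ≤ ent p X := by
  have := ent_prod_le_add p hp0 hp1 X Y
  unfold condEnt
  linarith

theorem ent_comp_of_injective [Fintype S] [Fintype T] (X : Ω → S) {g : S → T}
    (hg : Function.Injective g) :
    ent p (fun ω => g (X ω)) = ent p X := by
  have hpm : ∀ s, pm p (fun ω => g (X ω)) (g s) = pm p X s := fun s => by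
    unfold pm
    simp only [hg.eq_iff]
  have hpm_zero : ∀ t ∉ univ.image g, pm p (fun ω => g (X ω)) t = 0 := fun t ht =>
    sum_eq_zero fun ω hω =>
      (ht ((mem_filter.1 hω).2 ▸ mem_image_of_mem g (mem_univ (X ω)))).elim
  unfold ent
  rw [← sum_subset (subset_univ (univ.image g)) fun t _ ht => by simp [hpm_zero t ht],
    sum_image fun _ _ _ _ hab => hg hab]
  simp only [hpm]

theorem ent_of_subsingleton [Fintype S] [Subsingleton S] (hp1 : ∑ ω, p ω = 1) (X : Ω → S) :
    ent p X = 0 := by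
  have hpm : ∀ s, pm p X s = 1 := fun s => by
    unfold pm
    rw [filter_true_of_mem fun ω _ => Subsingleton.elim (X ω) s, hp1]
  simp [ent, hpm]

theorem ent_restrict_le_sum [Fintype S] (hp0 : ∀ ω, 0 ≤ p ω) (hp1 : ∑ ω, p ω = 1) {ι : Type*}
    [DecidableEq ι] (X : ι → Ω → S) (I : Finset ι) :
    ent p (fun ω (i : I) => X i ω) ≤ ∑ i ∈ I, ent p (X i) := by
  induction I using Finset.induction with
  | empty => simp [ent_of_subsingleton p hp1]
  | @insert a I ha ih =>
    let split : ({x // x ∈ insert a I} → S) → S × ({x // x ∈ I} → S) :=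
      fun f => (f ⟨a, mem_insert_self a I⟩, fun i => f ⟨i, mem_insert_of_mem i.2⟩)
    have hsplit : Function.Injective split := by
      intro f₁ f₂ hf
      funext ⟨x, hx⟩
      rcases mem_insert.1 hx with rfl | hx
      · exact congrArg Prod.fst hf
      · exact congrFun (congrArg Prod.snd hf) ⟨x, hx⟩
    rw [← ent_comp_of_injective p _ hsplit, sum_insert ha]
    exact (ent_prod_le_add p hp0 hp1 _ _).trans (add_le_add_right ih _)

end Entropy

theorem filter_notMem_powersetCard {α : Type*} [DecidableEq α] (s : Finset α) (n : ℕ) (a : α) :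
    {L ∈ powersetCard n s | a ∉ L} = powersetCard n (s.erase a) := by
  ext L
  simp [mem_powersetCard, subset_erase, and_right_comm]

theorem sum_powersetCard_sum_compl {ι M : Type*} [Fintype ι] [DecidableEq ι] [AddCommMonoid M]
    (f : ι → M) (ℓ : ℕ) :
    ∑ L ∈ powersetCard ℓ univ, ∑ i ∈ Lᶜ, f i = (Fintype.card ι - 1).choose ℓ • ∑ i, f i := by
  rw [sum_comm' (t' := univ) (s' := fun i => {L ∈ powersetCard ℓ univ | i ∉ L})
    fun L i => by simp [and_comm]]
  simp only [sum_const, filter_notMem_powersetCard, card_powersetCard,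
    card_erase_of_mem (mem_univ _), card_univ, smul_sum]

theorem mul_div_sub_le_of_choose_mul_le {N ℓ : ℕ} (hℓN : ℓ < N) {h x : ℝ}
    (hx : N.choose ℓ * h ≤ (N - 1).choose ℓ * x) : N * h / (N - ℓ) ≤ x := by
  obtain ⟨n, rfl⟩ : ∃ n, N = n + 1 := ⟨N - 1, by omega⟩
  have hchoose : ((n.choose ℓ * (n + 1) : ℕ) : ℝ) = ((n + 1).choose ℓ * (n + 1 - ℓ) : ℕ) := by
    rw [Nat.choose_mul_succ_eq]
  push_cast [Nat.cast_sub hℓN.le] at hchoose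
  have hpos : (0 : ℝ) < n.choose ℓ := by exact_mod_cast Nat.choose_pos (by omega)
  have hgap : (0 : ℝ) < n + 1 - ℓ := by
    have : (ℓ : ℝ) < n + 1 := by exact_mod_cast hℓN
    linarith
  push_cast at hx ⊢
  rw [div_le_iff₀ hgap]
  refine le_of_mul_le_mul_left ?_ hpos
  calc (n.choose ℓ : ℝ) * ((n + 1) * h) = (n + 1).choose ℓ * h * (n + 1 - ℓ) := by
        linear_combination h * hchoose
    _ ≤ n.choose ℓ * x * (n + 1 - ℓ) := by gcongr
    _ = n.choose ℓ * (x * (n + 1 - ℓ)) := by ring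

/-- If `X₁,…,X_N` satisfy `H(X_{Lᶜ} | X_L) ≥ h` for every subset
`L ⊆ [1:N]` of size `ℓ` (with `0 ≤ ℓ < N`), then `Σᵢ H(Xᵢ) ≥ N·h/(N-ℓ)`. -/
theorem han_type_entropy_bound
    {Ω : Type*} [Fintype Ω] (p : Ω → ℝ)
    (hp0 : ∀ ω, 0 ≤ p ω) (hp1 : ∑ ω, p ω = 1)
    {S : Type*} [Fintype S] [DecidableEq S]
    (N ℓ : ℕ) (hℓN : ℓ < N) (h : ℝ)
    (X : Fin N → Ω → S)
    (hcond : ∀ L : Finset (Fin N), L.card = ℓ →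
      condEnt p (fun ω => fun i : {x // x ∈ Lᶜ} => X i.1 ω)
        (fun ω => fun i : {x // x ∈ L} => X i.1 ω) ≥ h) :
    ∑ i, ent p (X i) ≥ (N : ℝ) * h / ((N : ℝ) - (ℓ : ℝ)) := by
  have hL : ∀ L ∈ powersetCard ℓ univ, h ≤ ∑ i ∈ Lᶜ, ent p (X i) := fun L hL =>
    (hcond L (mem_powersetCard_univ.1 hL)).le.trans
      ((condEnt_le_ent p hp0 hp1 _ _).trans (ent_restrict_le_sum p hp0 hp1 X Lᶜ))
  have hsum := card_nsmul_le_sum _ _ _ hL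
  rw [sum_powersetCard_sum_compl, card_powersetCard, card_univ, Fintype.card_fin,
    nsmul_eq_mul, nsmul_eq_mul] at hsum
  exact mul_div_sub_le_of_choose_mul_le hℓN hsum
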